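/- arXiv:1206.5167 — 7 statements merged into one kernel-verified Lean document; each statement's English description precedes it below -/
import Mathlib

section
/- Let V be a linear subspace of ℝ^n and let x, y ∈ V be elementary vectors with the same support. Then y = λx for some scalar λ ∈ ℝ. -/
open Finset

variable {n : ℕ}

/-- The support of a vector. -/
def supp (x : Fin n → ℝ) : Set (Fin n) := {j | x j ≠ 0}

/-- A nonzero vector of `V` is elementary if no nonzero vector of `V` has support
properly contained in its support. -/
def IsElementary (V : Submodule ℝ (Fin n → ℝ)) (x : Fin n → ℝ) : Prop :=
  x ∈ V ∧ x ≠ 0 ∧ ∀ y ∈ V, y ≠ 0 → ¬ (supp y ⊂ supp x)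

/-- A primitive vector: elementary with entries in `{-1, 0, 1}`. -/
def IsPrimitive (V : Submodule ℝ (Fin n → ℝ)) (x : Fin n → ℝ) : Prop :=
  IsElementary V x ∧ ∀ j, x j ∈ ({-1, 0, 1} : Set ℝ)

/-- `y` conforms to `x`. -/
def Conforms (y x : Fin n → ℝ) : Prop := ∀ j, y j ≠ 0 → y j * x j > 0

/-- A regular space: the kernel of a totally unimodular matrix. -/
def IsRegularSpace (V : Submodule ℝ (Fin n → ℝ)) : Prop :=
  ∃ (m : ℕ) (A : Matrix (Fin m) (Fin n) ℝ),
    A.IsTotallyUnimodular ∧ V = LinearMap.ker A.mulVecLin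

/-- An `r`-path: a primitive vector with value `+1` at `r`. -/
def IsRPath (V : Submodule ℝ (Fin n → ℝ)) (r : Fin n) (P : Fin n → ℝ) : Prop :=
  IsPrimitive V P ∧ P r = 1

/-- Feasibility with respect to capacity `c` (no constraint at `r`). -/
def Feasible (c : Fin n → ℝ) (r : Fin n) (f : Fin n → ℝ) : Prop :=
  ∀ j, j ≠ r → 0 ≤ f j ∧ f j ≤ c j

/-- An `r`-path `P` is augmenting for the flow `f`. -/
def Augmenting (V : Submodule ℝ (Fin n → ℝ)) (c : Fin n → ℝ) (r : Fin n)
    (f P : Fin n → ℝ) : Prop :=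
  IsRPath V r P ∧ ∃ ε : ℝ, 0 < ε ∧ Feasible c r (f + ε • P)

/-- The 1-norm. -/
def onorm (x : Fin n → ℝ) : ℝ := ∑ j, |x j|

/-- A shortest augmenting `r`-path. -/
def ShortestAug (V : Submodule ℝ (Fin n → ℝ)) (c : Fin n → ℝ) (r : Fin n)
    (f P : Fin n → ℝ) : Prop :=
  Augmenting V c r f P ∧ ∀ Q, Augmenting V c r f Q → onorm P ≤ onorm Q

/-- `g` is obtained from `f` by maximal augmentation along `P`. -/
def MaxAug (c : Fin n → ℝ) (r : Fin n) (f P g : Fin n → ℝ) : Prop :=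
  ∃ ε : ℝ, 0 < ε ∧ g = f + ε • P ∧ Feasible c r g ∧
    ∀ ε' : ℝ, ε < ε' → ¬ Feasible c r (f + ε' • P)

/-- A conformal primitive decomposition of `P + Q` in which `M` and `J` are the two
`r`-path summands (`M` playing the role of `P ∧ Q` and `J` of `P ∨ Q`). -/
def MeetJoinDecomp (V : Submodule ℝ (Fin n → ℝ)) (r : Fin n)
    (P Q M J : Fin n → ℝ) : Prop :=
  ∃ (k : ℕ) (p : Fin k → Fin n → ℝ) (a b : Fin k),
    (∀ i, IsPrimitive V (p i)) ∧ (∀ i, Conforms (p i) (P + Q)) ∧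
    (∑ i, p i) = P + Q ∧ a ≠ b ∧ p a = M ∧ p b = J ∧
    p a r = 1 ∧ p b r = 1 ∧ ∀ i, p i r = 1 → i = a ∨ i = b

theorem supp_sub_smul_ssubset {x y : Fin n → ℝ} {j : Fin n} (hj : x j ≠ 0)
    (hxy : supp x ⊆ supp y) : supp (y - (y j / x j) • x) ⊂ supp y := by
  refine ⟨fun i hi hyi => hi ?_, fun hsub => hsub (hxy hj) ?_⟩
  · have hxi : x i = 0 := by_contra fun hxi => hxy hxi hyi
    simp [hyi, hxi]
  · simp [hj]

theorem IsElementary.eq_zero_of_supp_ssubset {V : Submodule ℝ (Fin n → ℝ)} {y z : Fin n → ℝ}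
    (hy : IsElementary V y) (hz : z ∈ V) (hzy : supp z ⊂ supp y) : z = 0 :=
  by_contra fun hz0 => hy.2.2 z hz hz0 hzy

theorem stmt0 (V : Submodule ℝ (Fin n → ℝ)) (x y : Fin n → ℝ)
    (hx : IsElementary V x) (hy : IsElementary V y) (h : supp x = supp y) :
    ∃ lam : ℝ, y = lam • x := by
  obtain ⟨j, hj⟩ : ∃ j, x j ≠ 0 := Function.ne_iff.mp hx.2.1
  refine ⟨y j / x j, sub_eq_zero.mp ?_⟩
  exact hy.eq_zero_of_supp_ssubset (V.sub_mem hy.1 (V.smul_mem _ hx.1))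
    (supp_sub_smul_ssubset hj h.subset)
end

section
/- If V ⊆ ℝ^n is the kernel of a totally unimodular matrix, then every elementary vector of V is a scalar multiple of a vector with entries in {-1, 0, +1}. -/
open Finset

variable {n : ℕ}

/-!
Pick `k` with `x k ≠ 0` and let `T = supp x \ {k}`. A dependence among the columns of `A` indexed
by `T` would give a nonzero kernel vector with support inside `T ⊊ supp x`, so these columns are
independent and some square submatrix `C = A[R, T]` is invertible. Then `x_T / x_k` solves
`C y = -A[R, k]`, and by Cramer's rule each entry of `y` is a ratio of two square minors of `A`,
each in `{-1, 0, 1}` by total unimodularity, the denominator being nonzero.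
-/

namespace Matrix

variable {m n ι K : Type*} [Field K]

lemma mulVec_eq_submatrix_mulVec_comp [Fintype n] [Fintype ι] (A : Matrix m n K) {g : ι → n}
    (hg : g.Injective) {y : n → K} (hy : ∀ j, y j ≠ 0 → j ∈ Set.range g) :
    A *ᵥ y = A.submatrix id g *ᵥ (y ∘ g) := by
  ext r
  refine (Fintype.sum_of_injective g hg _ _ (fun j hj => ?_) fun _ => rfl).symm
  by_contra h
  exact hj (hy j (right_ne_zero_of_mul h))

lemma exists_isUnit_submatrix_of_linearIndependent_col [Fintype m] [Fintype ι] [DecidableEq ι]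
    (B : Matrix m ι K) (h : LinearIndependent K B.col) :
    ∃ f : ι → m, IsUnit (B.submatrix f id) := by
  have hrank : Module.finrank K (Submodule.span K (Set.range B.row)) = Fintype.card ι := by
    rw [← rank_eq_finrank_span_row, ← rank_transpose, LinearIndependent.rank_matrix]
    rwa [row_transpose]
  have hspan : Submodule.span K (Set.range B.row) = ⊤ :=
    Submodule.eq_top_of_finrank_eq (by rw [hrank, Module.finrank_fintype_fun_eq_card])
  obtain ⟨κ, a, -, hspan', hli⟩ := exists_linearIndependent' K B.row
  let b := Module.Basis.mk hli (by rw [hspan', hspan])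
  let e := b.indexEquiv (Pi.basisFun K ι)
  refine ⟨a ∘ e.symm, linearIndependent_rows_iff_isUnit.1 ?_⟩
  exact hli.comp e.symm e.symm.injective

lemma IsTotallyUnimodular.mem_range_signType_of_mulVec_eq_col {A : Matrix m n K}
    (hA : A.IsTotallyUnimodular) [Fintype ι] [DecidableEq ι] [DecidableEq n] {f : ι → m}
    {g : ι → n} (hdet : (A.submatrix f g).det ≠ 0) {k : n} {z : ι → K}
    (hz : A.submatrix f g *ᵥ z = fun r => A (f r) k) (i : ι) :
    z i ∈ Set.range SignType.cast := by
  set C := A.submatrix f g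
  have hcramer : C.det * z i = (A.submatrix f (Function.update g i k)).det := by
    have : C.det • z = C.cramer (C *ᵥ z) := by
      rw [cramer_eq_adjugate_mulVec, mulVec_mulVec, adjugate_mul, smul_mulVec, one_mulVec]
    rw [← smul_eq_mul, ← Pi.smul_apply, this, hz, cramer_apply]
    congr 1
    ext r j
    rcases eq_or_ne j i with rfl | hj
    · simp [C]
    · simp [C, hj]
  rw [isTotallyUnimodular_iff_fintype] at hA
  obtain ⟨s, hs⟩ := hA ι f g
  obtain ⟨t, ht⟩ := hA ι f (Function.update g i k)
  have hss : s * s = 1 := by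
    rcases s with _ | _ | _ <;> simp_all [C]
  refine ⟨s * t, ?_⟩
  calc ((s * t : SignType) : K) = s * (C.det * z i) := by rw [hcramer, ← ht, SignType.coe_mul]
    _ = ((s * s : SignType) : K) * z i := by rw [SignType.coe_mul, hs, mul_assoc]
    _ = z i := by rw [hss, SignType.coe_one, one_mul]

end Matrix

lemma IsElementary.eq_zero_of_supp_subset {V : Submodule ℝ (Fin n → ℝ)} {x y : Fin n → ℝ}
    (hx : IsElementary V x) (hy : y ∈ V) (hsub : supp y ⊆ supp x) {k : Fin n} (hxk : x k ≠ 0)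
    (hyk : y k = 0) : y = 0 := by
  by_contra hy0
  exact hx.2.2 y hy hy0 ((Set.ssubset_iff_of_subset hsub).2 ⟨k, hxk, fun h => h hyk⟩)

open Matrix in
lemma IsElementary.linearIndependent_col_submatrix {m : Type*} [Fintype m]
    {A : Matrix m (Fin n) ℝ} {x : Fin n → ℝ} (hx : IsElementary (LinearMap.ker A.mulVecLin) x)
    {k : Fin n} (hk : x k ≠ 0) :
    LinearIndependent ℝ (A.submatrix id (Subtype.val : {j // x j ≠ 0 ∧ j ≠ k} → Fin n)).col := by
  let g : {j // x j ≠ 0 ∧ j ≠ k} → Fin n := Subtype.val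
  have hg : g.Injective := Subtype.val_injective
  rw [← mulVec_injective_iff, ← coe_mulVecLin, injective_iff_map_eq_zero]
  intro c hc
  set y := Function.extend g c 0
  have hyc : y ∘ g = c := funext (hg.extend_apply c 0)
  have hy : ∀ j, y j ≠ 0 → j ∈ Set.range g := fun j hj => by
    by_contra h
    exact hj (Function.extend_apply' c (0 : Fin n → ℝ) j (by simpa using h))
  have hy0 : y = 0 := by
    refine hx.eq_zero_of_supp_subset (y := y) ?_ (fun j hj => ?_) hk ?_
    · show A *ᵥ y = 0
      rw [A.mulVec_eq_submatrix_mulVec_comp hg hy, hyc]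
      exact hc
    · obtain ⟨i, rfl⟩ := hy j hj
      exact i.2.1
    · by_contra h
      obtain ⟨i, hi⟩ := hy k h
      exact i.2.2 hi
  rw [← hyc, hy0]
  rfl

open Matrix in
lemma IsElementary.div_mem_range_signType {m : Type*} [Fintype m] {A : Matrix m (Fin n) ℝ}
    (hA : A.IsTotallyUnimodular) {x : Fin n → ℝ} (hx : IsElementary (LinearMap.ker A.mulVecLin) x)
    {k : Fin n} (hk : x k ≠ 0) (j : Fin n) : x j / x k ∈ Set.range SignType.cast := by
  classical
  let g : {j // x j ≠ 0 ∧ j ≠ k} → Fin n := Subtype.val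
  obtain ⟨f, hf⟩ :=
    exists_isUnit_submatrix_of_linearIndependent_col _ (hx.linearIndependent_col_submatrix hk)
  have hsys : A.submatrix f g *ᵥ (fun i => -(x (g i) / x k)) = fun r => A (f r) k := by
    set w := Pi.single k 1 - (x k)⁻¹ • x
    have hw : ∀ j, w j ≠ 0 → j ∈ Set.range g := by
      intro j hj
      have hjk : j ≠ k := by
        rintro rfl
        simp [w, hk] at hj
      exact ⟨⟨j, fun hxj => hj (by simp [w, hxj, hjk]), hjk⟩, rfl⟩
    have hAw : A *ᵥ w = A.col k := by
      simp [w, mulVec_sub, mulVec_smul, show A *ᵥ x = 0 from hx.1]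
    have hwg : w ∘ g = fun i => -(x (g i) / x k) := by
      ext i
      simp [w, g, i.2.2, div_eq_inv_mul]
    ext r
    have := congrFun ((A.mulVec_eq_submatrix_mulVec_comp Subtype.val_injective hw).symm.trans
      hAw) (f r)
    rwa [hwg] at this
  by_cases hjk : j = k
  · exact ⟨1, by simp [hjk, hk]⟩
  by_cases hxj : x j = 0
  · exact ⟨0, by simp [hxj]⟩
  obtain ⟨s, hs⟩ := hA.mem_range_signType_of_mulVec_eq_col
    ((isUnit_iff_isUnit_det _).1 hf).ne_zero hsys ⟨j, hxj, hjk⟩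
  exact ⟨-s, by rw [SignType.coe_neg, hs, neg_neg]⟩

theorem stmt1 (V : Submodule ℝ (Fin n → ℝ)) (hV : IsRegularSpace V)
    (x : Fin n → ℝ) (hx : IsElementary V x) :
    ∃ (lam : ℝ) (p : Fin n → ℝ), (∀ j, p j ∈ ({-1, 0, 1} : Set ℝ)) ∧ x = lam • p := by
  obtain ⟨m, A, hA, rfl⟩ := hV
  obtain ⟨k, hk⟩ : ∃ k, x k ≠ 0 := Function.ne_iff.mp hx.2.1
  refine ⟨x k, fun j => x j / x k, fun j => ?_, ?_⟩
  · obtain ⟨s, hs⟩ := hx.div_mem_range_signType hA hk j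
    change x j / x k ∈ _
    rw [← hs]
    cases s <;> simp
  · ext j
    simp [mul_div_cancel₀ _ hk]
end

section
/- Let V ⊆ ℝ^n be a regular space with distinguished index r, let c : E\{r} → ℝ₊ be a capacity, and let f ∈ V be a feasible flow (0 ≤ f_j ≤ c_j for j ≠ r). Then f maximizes f_r among feasible flows if and only if there is no augmenting r-path for f. -/
open Finset

variable {n : ℕ}

/-! If a feasible `f'` has `f' r > f r`, then `g = f' - f ∈ V` has `g r > 0`. Shrinking supports
while staying conformal to `g` and positive at `r` ends at an elementary vector `z` conformal to
`g`. The entries of `-z / z r` on `supp z \ {r}` solve a nonsingular square subsystem of the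
totally unimodular matrix whose right-hand side is its column `r`, so by Cramer's rule they lie in
`{-1, 0, 1}`, and `z / z r` is a primitive `r`-path `P`. Since `P` conforms to `f' - f`, a small
step along `P` moves each coordinate of `f` towards that of `f'`, and so stays feasible. -/

section Conformal

variable {V : Submodule ℝ (Fin n → ℝ)} {r : Fin n}

theorem supp_neg (x : Fin n → ℝ) : supp (-x) = supp x := by
  ext j; simp [supp]

theorem supp_smul {β : ℝ} (hβ : β ≠ 0) (x : Fin n → ℝ) : supp (β • x) = supp x := by
  ext j; simp [supp, hβ]

theorem Conforms.refl (x : Fin n → ℝ) : Conforms x x := fun _ hj => mul_self_pos.2 hj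

theorem Conforms.supp_subset {x y : Fin n → ℝ} (h : Conforms x y) : supp x ⊆ supp y :=
  fun j hj => right_ne_zero_of_mul (h j hj).ne'

theorem Conforms.trans {x y z : Fin n → ℝ} (hxy : Conforms x y) (hyz : Conforms y z) :
    Conforms x z := by
  intro j hj
  have hy : y j ≠ 0 := hxy.supp_subset hj
  have h : 0 < (x j * z j) * (y j * y j) := by
    have := mul_pos (hxy j hj) (hyz j hy)
    linarith [show (x j * y j) * (y j * z j) = (x j * z j) * (y j * y j) by ring]
  exact pos_of_mul_pos_left h (mul_self_nonneg _)

theorem conforms_of_nonneg_mul {x y : Fin n → ℝ} (h : ∀ j, 0 ≤ x j * y j)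
    (hs : supp x ⊆ supp y) : Conforms x y :=
  fun j hj => (h j).lt_of_ne (mul_ne_zero hj (hs hj)).symm

theorem IsElementary.smul {x : Fin n → ℝ} (hx : IsElementary V x) {β : ℝ} (hβ : β ≠ 0) :
    IsElementary V (β • x) := by
  obtain ⟨hxV, hx0, hmin⟩ := hx
  refine ⟨V.smul_mem β hxV, smul_ne_zero hβ hx0, fun y hyV hy0 hss => ?_⟩
  exact hmin y hyV hy0 (supp_smul hβ x ▸ hss)

/-- Walk from `z` along `-u` until the first coordinate with `u j * z j > 0` vanishes; `u r ≤ 0`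
keeps the `r`-coordinate positive. -/
theorem exists_conforms_supp_ssubset_of_pos_mul {z u : Fin n → ℝ} (hzV : z ∈ V) (huV : u ∈ V)
    (hzr : 0 < z r) (hur : u r ≤ 0) (hsupp : supp u ⊆ supp z) {j₀ : Fin n}
    (hj₀ : 0 < u j₀ * z j₀) :
    ∃ z' ∈ V, Conforms z' z ∧ 0 < z' r ∧ supp z' ⊂ supp z := by
  classical
  set A := univ.filter fun j => 0 < u j * z j
  have hA : A.Nonempty := ⟨j₀, by simpa [A] using hj₀⟩
  obtain ⟨j₁, hj₁A, ht⟩ := exists_mem_eq_inf' hA fun j => z j / u j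
  set t := A.inf' hA fun j => z j / u j
  have hpos : ∀ j ∈ A, 0 < z j / u j := fun j hj =>
    div_pos_iff.2 ((mul_pos_iff.1 (mem_filter.1 hj).2).imp And.symm And.symm)
  have htpos : 0 < t := (lt_inf'_iff hA).2 hpos
  have hzero : ∀ j, z j = 0 → (z - t • u) j = 0 := fun j hj => by
    have hu : u j = 0 := not_not.1 fun h => hsupp h hj
    simp [hj, hu]
  have hmul : ∀ j, 0 ≤ (z - t • u) j * z j := fun j => by
    simp only [Pi.sub_apply, Pi.smul_apply, smul_eq_mul]
    by_cases hj : j ∈ A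
    · have hle : t * (u j * z j) ≤ z j / u j * (u j * z j) :=
        mul_le_mul_of_nonneg_right (inf'_le _ hj) (mem_filter.1 hj).2.le
      have hu : u j ≠ 0 := left_ne_zero_of_mul (mem_filter.1 hj).2.ne'
      rw [show z j / u j * (u j * z j) = z j * z j by field_simp] at hle
      nlinarith
    · have : u j * z j ≤ 0 := not_lt.1 fun h => hj (mem_filter.2 ⟨mem_univ _, h⟩)
      nlinarith [mul_self_nonneg (z j)]
  have hconf : Conforms (z - t • u) z :=
    conforms_of_nonneg_mul hmul fun j hj hzj => hj (hzero j hzj)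
  refine ⟨z - t • u, V.sub_mem hzV (V.smul_mem t huV), hconf, ?_, ?_⟩
  · simp only [Pi.sub_apply, Pi.smul_apply, smul_eq_mul]
    nlinarith
  · refine (Set.ssubset_iff_of_subset hconf.supp_subset).2 ⟨j₁, ?_, ?_⟩
    · exact right_ne_zero_of_mul (mem_filter.1 hj₁A).2.ne'
    · have hu : u j₁ ≠ 0 := left_ne_zero_of_mul (mem_filter.1 hj₁A).2.ne'
      simp only [supp, Set.mem_ofPred_eq, Pi.sub_apply, Pi.smul_apply, smul_eq_mul, t, ht,
        not_not]
      field_simp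
      ring

theorem exists_conforms_supp_ssubset_of_not_isElementary {z : Fin n → ℝ} (hzV : z ∈ V)
    (hzr : 0 < z r) (hz : ¬ IsElementary V z) :
    ∃ z' ∈ V, Conforms z' z ∧ 0 < z' r ∧ supp z' ⊂ supp z := by
  have hz0 : z ≠ 0 := fun h => by simp [h] at hzr
  obtain ⟨w, hwV, hw0, hss⟩ : ∃ w ∈ V, w ≠ 0 ∧ supp w ⊂ supp z := by
    simpa [IsElementary, hzV, hz0] using hz
  obtain ⟨u, huV, hu0, hur, hus⟩ : ∃ u ∈ V, u ≠ 0 ∧ u r ≤ 0 ∧ supp u ⊂ supp z := by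
    rcases le_or_gt (w r) 0 with h | h
    · exact ⟨w, hwV, hw0, h, hss⟩
    · exact ⟨-w, V.neg_mem hwV, neg_ne_zero.2 hw0, by simp; linarith, by rwa [supp_neg]⟩
  by_cases hpos : ∃ j, 0 < u j * z j
  · obtain ⟨j, hj⟩ := hpos
    exact exists_conforms_supp_ssubset_of_pos_mul hzV huV hzr hur hus.subset hj
  simp only [not_exists, not_lt] at hpos
  have hneg : ∀ j, 0 ≤ (-u) j * z j := fun j => by simpa using hpos j
  rcases hur.lt_or_eq with hur | hur
  · exact ⟨-u, V.neg_mem huV, conforms_of_nonneg_mul hneg (by rw [supp_neg]; exact hus.subset),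
      by simpa using hur, by rwa [supp_neg]⟩
  · obtain ⟨j, hj⟩ := Function.ne_iff.1 hu0
    have hj' : 0 < (-u) j * z j :=
      (hneg j).lt_of_ne' (by simpa using mul_ne_zero hj (hus.subset hj))
    exact exists_conforms_supp_ssubset_of_pos_mul hzV (V.neg_mem huV) hzr (by simp [hur])
      (by rw [supp_neg]; exact hus.subset) hj'

theorem exists_isElementary_conforms {z : Fin n → ℝ} (hzV : z ∈ V) (hzr : 0 < z r) :
    ∃ e, IsElementary V e ∧ Conforms e z ∧ 0 < e r := by
  induction hN : (supp z).ncard using Nat.strong_induction_on generalizing z with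
  | _ N ih =>
  by_cases he : IsElementary V z
  · exact ⟨z, he, Conforms.refl z, hzr⟩
  obtain ⟨z', hz'V, hz'z, hz'r, hss⟩ :=
    exists_conforms_supp_ssubset_of_not_isElementary hzV hzr he
  obtain ⟨e, he, hez', her⟩ :=
    ih _ (hN ▸ Set.ncard_lt_ncard hss (Set.toFinite _)) hz'V hz'r rfl
  exact ⟨e, he, hez'.trans hz'z, her⟩

end Conformal

namespace Matrix

theorem cramer_mulVec {ι K : Type*} [Fintype ι] [DecidableEq ι] [CommRing K]
    (M : Matrix ι ι K) (v : ι → K) : M.cramer (M *ᵥ v) = M.det • v := by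
  rw [cramer_eq_adjugate_mulVec, mulVec_mulVec, adjugate_mul, smul_mulVec, one_mulVec]

theorem exists_det_submatrix_ne_zero {m ι K : Type*} [Fintype m] [Fintype ι]
    [DecidableEq ι] [Field K] (B : Matrix m ι K) (hB : LinearIndependent K B.col) :
    ∃ e : ι → m, (B.submatrix e id).det ≠ 0 := by
  have hspan : Submodule.span K (Set.range B.row) = ⊤ := by
    apply Submodule.eq_top_of_finrank_eq
    rw [← rank_eq_finrank_span_row, ← rank_transpose, LinearIndependent.rank_matrix hB,
      Module.finrank_fintype_fun_eq_card]
  obtain ⟨κ, a, -, hspan', hli⟩ := exists_linearIndependent' K B.row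
  let b := Module.Basis.mk hli (by rw [hspan', hspan])
  let σ := (Pi.basisFun K ι).indexEquiv b
  refine ⟨a ∘ σ, ?_⟩
  have : IsUnit (B.submatrix (a ∘ σ) id) :=
    linearIndependent_rows_iff_isUnit.1 (hli.comp σ σ.injective)
  exact ((isUnit_iff_isUnit_det _).1 this).ne_zero

theorem IsTotallyUnimodular.mem_range_of_mulVec_eq_col {m n κ R : Type*} [Fintype κ]
    [DecidableEq κ] [CommRing R] {A : Matrix m n R} (hA : A.IsTotallyUnimodular) {e : κ → m}
    {g : κ → n} (hdet : (A.submatrix e g).det ≠ 0) {v : κ → R} {c : n}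
    (hv : A.submatrix e g *ᵥ v = fun i => A (e i) c) (s : κ) :
    v s ∈ Set.range (SignType.cast : SignType → R) := by
  have hcol : (A.submatrix e g).updateCol s (fun i => A (e i) c) =
      A.submatrix e (Function.update g s c) := by
    ext i k
    by_cases hk : k = s <;> simp [hk]
  have key : (A.submatrix e g).det * v s = (A.submatrix e (Function.update g s c)).det := by
    rw [← hcol, ← cramer_apply, ← hv, cramer_mulVec, Pi.smul_apply, smul_eq_mul]
  obtain ⟨τ, hτ⟩ := (A.isTotallyUnimodular_iff_fintype.1 hA) κ e g
  obtain ⟨σ, hσ⟩ := (A.isTotallyUnimodular_iff_fintype.1 hA) κ e (Function.update g s c)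
  rw [← hτ, ← hσ] at key
  cases τ <;> simp only [SignType.zero_eq_zero, SignType.neg_eq_neg_one, SignType.pos_eq_one,
    SignType.coe_zero, SignType.coe_neg_one, SignType.coe_one] at hτ key
  · exact absurd hτ.symm hdet
  · exact ⟨-σ, by rw [SignType.coe_neg]; linear_combination key⟩
  · exact ⟨σ, by linear_combination -key⟩

end Matrix

section TotallyUnimodular

open Matrix

variable {ι : Type*} {A : Matrix ι (Fin n) ℝ} {z : Fin n → ℝ}

theorem IsElementary.linearIndependent_col_submatrix_s4
    (hz : IsElementary (LinearMap.ker A.mulVecLin) z) {S : Finset (Fin n)}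
    (hS : (S : Set (Fin n)) ⊂ supp z) :
    LinearIndependent ℝ (A.submatrix id ((↑) : S → Fin n)).col := by
  classical
  rw [Fintype.linearIndependent_iff]
  intro d hd s
  set y : Fin n → ℝ := fun k => if h : k ∈ S then d ⟨k, h⟩ else 0
  have hyS : supp y ⊆ S := fun k hk => by_contra fun h => hk (dif_neg h)
  have hyker : y ∈ LinearMap.ker A.mulVecLin := by
    rw [LinearMap.mem_ker, mulVecLin_apply]
    funext x
    rw [mulVec, dotProduct, ← sum_subset (subset_univ S) fun k _ hk => by simp [y, hk],
      ← sum_coe_sort S]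
    simpa [y, mul_comm] using congrFun hd x
  have hy0 : y = 0 := by
    by_contra hy0
    exact hz.2.2 y hyker hy0 (hyS.trans_ssubset hS)
  simpa [y] using congrFun hy0 s

theorem Matrix.IsTotallyUnimodular.div_mem_of_isElementary [Fintype ι]
    (hA : A.IsTotallyUnimodular)
    (hz : IsElementary (LinearMap.ker A.mulVecLin) z) {r : Fin n} (hzr : z r ≠ 0) (j : Fin n) :
    z j / z r ∈ Set.range (SignType.cast : SignType → ℝ) := by
  set S := (univ.filter (z · ≠ 0)).erase r
  by_cases hjS : j ∉ S
  · by_cases hzj : z j = 0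
    · exact ⟨0, by simp [hzj]⟩
    · obtain rfl : j = r := by simpa [S, hzj] using hjS
      exact ⟨1, by simp [hzr]⟩
  rw [not_not] at hjS
  have hSz : ∀ k ∈ S, z k ≠ 0 := fun k hk => (mem_filter.1 (mem_of_mem_erase hk)).2
  have hS : (S : Set (Fin n)) ⊂ supp z :=
    (Set.ssubset_iff_of_subset hSz).2 ⟨r, hzr, notMem_erase r _⟩
  obtain ⟨e, he⟩ := (A.submatrix id ((↑) : S → Fin n)).exists_det_submatrix_ne_zero
    (hz.linearIndependent_col_submatrix_s4 hS)
  set M := A.submatrix e ((↑) : S → Fin n)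
  have hrow : ∀ i, A (e i) r * z r + ∑ k ∈ S, A (e i) k * z k = 0 := fun i => by
    refine (add_sum_erase _ (fun k => A (e i) k * z k)
      (mem_filter.2 ⟨mem_univ r, hzr⟩)).trans ?_
    rw [sum_filter_of_ne fun k _ => right_ne_zero_of_mul]
    simpa [mulVec, dotProduct] using congrFun (LinearMap.mem_ker.1 hz.1) (e i)
  have hM : M *ᵥ (fun s => -(z s / z r)) = fun i => A (e i) r := by
    funext i
    simp only [mulVec, dotProduct, M, submatrix_apply]
    rw [sum_coe_sort S fun k => A (e i) k * -(z k / z r)]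
    simp only [mul_neg, sum_neg_distrib, ← mul_div_assoc, ← sum_div]
    field_simp
    linarith [hrow i]
  obtain ⟨σ, hσ⟩ := hA.mem_range_of_mulVec_eq_col he hM ⟨j, hjS⟩
  exact ⟨-σ, by simp [hσ]⟩

end TotallyUnimodular

theorem IsRegularSpace.exists_isRPath_conforms {V : Submodule ℝ (Fin n → ℝ)}
    (hV : IsRegularSpace V) {r : Fin n} {g : Fin n → ℝ} (hgV : g ∈ V) (hgr : 0 < g r) :
    ∃ P, IsRPath V r P ∧ Conforms P g := by
  obtain ⟨m, A, hA, rfl⟩ := hV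
  obtain ⟨z, hz, hzg, hzr⟩ := exists_isElementary_conforms hgV hgr
  have hPz : Conforms ((z r)⁻¹ • z) z := by
    refine conforms_of_nonneg_mul (fun j => ?_) (supp_smul (inv_ne_zero hzr.ne') z).le
    rw [Pi.smul_apply, smul_eq_mul, mul_assoc]
    exact mul_nonneg (inv_nonneg.2 hzr.le) (mul_self_nonneg _)
  refine ⟨(z r)⁻¹ • z, ⟨⟨hz.smul (inv_ne_zero hzr.ne'), fun j => ?_⟩, by simp [hzr.ne']⟩,
    hPz.trans hzg⟩
  obtain ⟨σ, hσ⟩ := hA.div_mem_of_isElementary hz hzr.ne' j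
  rw [Pi.smul_apply, smul_eq_mul, inv_mul_eq_div, ← hσ]
  cases σ <;> simp

open Filter Topology in
theorem augmenting_of_conforms {V : Submodule ℝ (Fin n → ℝ)} {c : Fin n → ℝ} {r : Fin n}
    {f f' P : Fin n → ℝ} (hP : IsRPath V r P) (hf : Feasible c r f) (hf' : Feasible c r f')
    (hPf : Conforms P (f' - f)) : Augmenting V c r f P := by
  have hev : ∀ᶠ ε in 𝓝[>] (0 : ℝ), ∀ j, P j ≠ 0 → ε ≤ P j * (f' j - f j) :=
    eventually_all.2 fun j => eventually_imp_distrib_left.2 fun hj =>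
      eventually_nhdsWithin_of_eventually_nhds (eventually_le_nhds (hPf j hj))
  obtain ⟨ε, hεle, hε⟩ := (hev.and self_mem_nhdsWithin).exists
  refine ⟨hP, ε, hε, fun j hjr => ?_⟩
  obtain ⟨hf0, hfc⟩ := hf j hjr
  obtain ⟨hf'0, hf'c⟩ := hf' j hjr
  simp only [Pi.add_apply, Pi.smul_apply, smul_eq_mul]
  have hj := hεle j
  obtain h | h | h : P j = -1 ∨ P j = 0 ∨ P j = 1 := hP.1.2 j
  all_goals norm_num [h] at hj ⊢; constructor <;> linarith

theorem stmt4_general (V : Submodule ℝ (Fin n → ℝ)) (hV : IsRegularSpace V)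
    (r : Fin n) (c : Fin n → ℝ)
    (f : Fin n → ℝ) (hfV : f ∈ V) (hf : Feasible c r f) :
    (∀ f' ∈ V, Feasible c r f' → f' r ≤ f r) ↔
      ¬ ∃ P, Augmenting V c r f P := by
  constructor
  · rintro hmax ⟨P, hP, ε, hε, hfeas⟩
    have h := hmax _ (V.add_mem hfV (V.smul_mem ε hP.1.1.1)) hfeas
    simp only [Pi.add_apply, Pi.smul_apply, smul_eq_mul, hP.2, mul_one] at h
    linarith
  · intro hnoaug f' hf'V hf'
    by_contra! hlt
    obtain ⟨P, hP, hPf⟩ :=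
      hV.exists_isRPath_conforms (V.sub_mem hf'V hfV) (sub_pos.2 hlt : 0 < (f' - f) r)
    exact hnoaug ⟨P, augmenting_of_conforms hP hf hf' hPf⟩

theorem stmt4 (V : Submodule ℝ (Fin n → ℝ)) (hV : IsRegularSpace V)
    (r : Fin n) (c : Fin n → ℝ) (hc : ∀ j, j ≠ r → 0 ≤ c j)
    (f : Fin n → ℝ) (hfV : f ∈ V) (hf : Feasible c r f) :
    (∀ f' ∈ V, Feasible c r f' → f' r ≤ f r) ↔
      ¬ ∃ P, Augmenting V c r f P :=
  stmt4_general V hV r c f hfV hf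
end

section
/- Let V ⊆ ℝ^n be a regular space and P, Q ∈ V be r-paths. Write P + Q = p^1 + ... + p^k as a sum of primitive vectors each conforming to P + Q. Then exactly two of the summands p^i satisfy p^i_r = +1. -/
/-! At the coordinate `r` every summand is `0`, `1` or `-1`; conformity to `P + Q`, whose
`r`-entry is `2`, rules out `-1`. So the `r`-entries of the summands are `0`s and `1`s adding
up to `2`, and exactly two of them are `1`. -/

open Finset

variable {n : ℕ}

lemma Conforms.apply_eq_zero_or_one {x y : Fin n → ℝ} (hxy : Conforms x y) {j : Fin n}
    (hx : x j ∈ ({-1, 0, 1} : Set ℝ)) (hy : 0 < y j) : x j = 0 ∨ x j = 1 := by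
  rcases hx with h | h | h
  · have := hxy j (by rw [h]; norm_num)
    rw [h] at this
    linarith
  · exact Or.inl h
  · exact Or.inr h

lemma sum_eq_card_filter_eq_one {ι : Type*} [Fintype ι] (f : ι → ℝ)
    (hf : ∀ i, f i = 0 ∨ f i = 1) : ∑ i, f i = #{i | f i = 1} := by
  rw [← sum_boole]
  refine sum_congr rfl fun i _ => ?_
  rcases hf i with h | h <;> simp [h]

lemma exists_pair_of_sum_eq_two {ι : Type*} [Fintype ι] [DecidableEq ι] (f : ι → ℝ)
    (hf : ∀ i, f i = 0 ∨ f i = 1) (hsum : ∑ i, f i = 2) :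
    ∃ a b, a ≠ b ∧ f a = 1 ∧ f b = 1 ∧ ∀ i, f i = 1 → i = a ∨ i = b := by
  have hcard : #{i | f i = 1} = 2 := by
    exact_mod_cast (sum_eq_card_filter_eq_one f hf).symm.trans hsum
  obtain ⟨a, b, hab, hS⟩ := card_eq_two.mp hcard
  have hmem : ∀ i, f i = 1 ↔ i = a ∨ i = b := fun i => by
    simpa using Finset.ext_iff.mp hS i
  exact ⟨a, b, hab, (hmem a).2 (Or.inl rfl), (hmem b).2 (Or.inr rfl), fun i => (hmem i).1⟩

theorem stmt5_general (V : Submodule ℝ (Fin n → ℝ))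
    (r : Fin n) (P Q : Fin n → ℝ) (hP : IsRPath V r P) (hQ : IsRPath V r Q)
    (k : ℕ) (p : Fin k → Fin n → ℝ)
    (hprim : ∀ i, IsPrimitive V (p i))
    (hconf : ∀ i, Conforms (p i) (P + Q))
    (hsum : (∑ i, p i) = P + Q) :
    ∃ a b : Fin k, a ≠ b ∧ p a r = 1 ∧ p b r = 1 ∧
      ∀ i, p i r = 1 → i = a ∨ i = b := by
  have hPQr : (P + Q) r = 2 := by
    rw [Pi.add_apply, hP.2, hQ.2]
    norm_num
  refine exists_pair_of_sum_eq_two (fun i => p i r)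
    (fun i => (hconf i).apply_eq_zero_or_one ((hprim i).2 r) (by rw [hPQr]; norm_num)) ?_
  rw [← hPQr, ← hsum, Finset.sum_apply]

theorem stmt5 (V : Submodule ℝ (Fin n → ℝ)) (hV : IsRegularSpace V)
    (r : Fin n) (P Q : Fin n → ℝ) (hP : IsRPath V r P) (hQ : IsRPath V r Q)
    (k : ℕ) (p : Fin k → Fin n → ℝ)
    (hprim : ∀ i, IsPrimitive V (p i))
    (hconf : ∀ i, Conforms (p i) (P + Q))
    (hsum : (∑ i, p i) = P + Q) :
    ∃ a b : Fin k, a ≠ b ∧ p a r = 1 ∧ p b r = 1 ∧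
      ∀ i, p i r = 1 → i = a ∨ i = b :=
  stmt5_general V r P Q hP hQ k p hprim hconf hsum
end

section
/- Let V ⊆ ℝ^n be a regular space, P, Q ∈ V r-paths, and let P∧Q, P∨Q be the two r-path summands in a conformal primitive decomposition of P + Q. Then |P∧Q| + |P∨Q| ≤ |P| + |Q|, with strict inequality if P and Q are nonconformal. -/
open Finset

variable {n : ℕ}

/-!
Conformality makes the 1-norm additive over the decomposition of `P + Q`, so
`|P ∧ Q| + |P ∨ Q| ≤ |P + Q| ≤ |P| + |Q|`; at a coordinate where `P` and `Q` have opposite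
signs the triangle inequality is strict.
-/

theorem Finset.sum_abs_eq_abs_sum_of_mul_pos {ι : Type*} (s : Finset ι) (f : ι → ℝ)
    (h : ∀ i ∈ s, f i ≠ 0 → 0 < f i * ∑ k ∈ s, f k) :
    ∑ i ∈ s, |f i| = |∑ i ∈ s, f i| := by
  set x := ∑ k ∈ s, f k
  by_cases hx : x = 0
  · have hzero : ∀ i ∈ s, f i = 0 := fun i hi => by
      by_contra hfi
      simpa [hx] using h i hi hfi
    rw [hx, abs_zero]
    exact sum_eq_zero fun i hi => by rw [hzero i hi, abs_zero]
  · have hterm : ∀ i ∈ s, |f i| * |x| = f i * x := by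
      intro i hi
      rw [← abs_mul]
      by_cases hfi : f i = 0
      · simp [hfi]
      · exact abs_of_pos (h i hi hfi)
    apply mul_right_cancel₀ (abs_ne_zero.2 hx)
    rw [sum_mul, sum_congr rfl hterm, ← sum_mul, abs_mul_abs_self]

theorem onorm_nonneg (x : Fin n → ℝ) : 0 ≤ onorm x :=
  sum_nonneg fun j _ => abs_nonneg (x j)

theorem onorm_add_le (x y : Fin n → ℝ) : onorm (x + y) ≤ onorm x + onorm y := by
  rw [onorm, onorm, onorm, ← sum_add_distrib]
  exact sum_le_sum fun j _ => abs_add_le (x j) (y j)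

theorem onorm_add_lt_of_mul_neg {x y : Fin n → ℝ} {j : Fin n} (hj : x j * y j < 0) :
    onorm (x + y) < onorm x + onorm y := by
  have hstrict : |x j + y j| < |x j| + |y j| := by
    refine lt_of_le_of_ne (abs_add_le _ _) fun heq => ?_
    rcases (abs_add_eq_add_abs_iff _ _).1 heq with ⟨hx, hy⟩ | ⟨hx, hy⟩ <;> nlinarith
  rw [onorm, onorm, onorm, ← sum_add_distrib]
  exact sum_lt_sum (fun i _ => abs_add_le (x i) (y i)) ⟨j, mem_univ j, hstrict⟩

theorem onorm_sum_of_conforms {ι : Type*} [Fintype ι] (p : ι → Fin n → ℝ)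
    (h : ∀ i, Conforms (p i) (∑ k, p k)) : ∑ i, onorm (p i) = onorm (∑ i, p i) := by
  unfold onorm
  rw [sum_comm]
  refine sum_congr rfl fun j _ => ?_
  rw [Finset.sum_apply]
  refine sum_abs_eq_abs_sum_of_mul_pos _ _ fun i _ hi => ?_
  simpa [Finset.sum_apply] using h i j hi

theorem onorm_add_onorm_le_sum {ι : Type*} [Fintype ι] [DecidableEq ι]
    (p : ι → Fin n → ℝ) {a b : ι} (hab : a ≠ b) :
    onorm (p a) + onorm (p b) ≤ ∑ i, onorm (p i) := by
  rw [← sum_pair (f := fun i => onorm (p i)) hab]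
  exact sum_le_sum_of_subset_of_nonneg (subset_univ _) fun i _ _ => onorm_nonneg (p i)

theorem stmt7_general (V : Submodule ℝ (Fin n → ℝ))
    (r : Fin n) (P Q M J : Fin n → ℝ)
    (hMJ : MeetJoinDecomp V r P Q M J) :
    onorm M + onorm J ≤ onorm P + onorm Q ∧
      ((∃ j, P j * Q j = -1) → onorm M + onorm J < onorm P + onorm Q) := by
  obtain ⟨k, p, a, b, -, hconf, hsum, hab, rfl, rfl, -⟩ := hMJ
  have hsplit : onorm (p a) + onorm (p b) ≤ onorm (P + Q) := by
    rw [← hsum] at hconf ⊢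
    exact (onorm_add_onorm_le_sum p hab).trans (onorm_sum_of_conforms p hconf).le
  refine ⟨hsplit.trans (onorm_add_le P Q), fun ⟨j, hj⟩ => ?_⟩
  exact hsplit.trans_lt (onorm_add_lt_of_mul_neg (j := j) (by linarith))

theorem stmt7 (V : Submodule ℝ (Fin n → ℝ)) (hV : IsRegularSpace V)
    (r : Fin n) (P Q M J : Fin n → ℝ) (hP : IsRPath V r P) (hQ : IsRPath V r Q)
    (hMJ : MeetJoinDecomp V r P Q M J) :
    onorm M + onorm J ≤ onorm P + onorm Q ∧
      ((∃ j, P j * Q j = -1) → onorm M + onorm J < onorm P + onorm Q) :=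
  stmt7_general V r P Q M J hMJ
end

section
/- Let V ⊆ ℝ^n be a regular space, P, Q ∈ V r-paths, and P∧Q, P∨Q the r-path summands of a conformal primitive decomposition of P + Q. For any index j: if (P∧Q)_j ≠ 0 then (P∧Q)_j = P_j or (P∧Q)_j = Q_j; and if P_j Q_j = -1 then (P∧Q)_j = (P∨Q)_j = 0. -/
open Finset

variable {n : ℕ}

/-
Both claims hold coordinatewise by conformality: a summand conforming to `P + Q` vanishes
where `P` and `Q` cancel, and where it is nonzero its sign is that of `P_j + Q_j`, hence
that of `P_j` or of `Q_j`.
-/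
lemma Conforms.apply_eq_zero {y x : Fin n → ℝ} (h : Conforms y x) {j : Fin n}
    (hx : x j = 0) : y j = 0 := by
  by_contra hy
  simpa [hx] using h j hy

lemma eq_or_eq_of_mul_add_pos {a b c : ℝ} (ha : a ∈ ({-1, 0, 1} : Set ℝ))
    (hb : b ∈ ({-1, 0, 1} : Set ℝ)) (hc : c ∈ ({-1, 0, 1} : Set ℝ)) (h : 0 < c * (a + b)) :
    c = a ∨ c = b := by
  simp only [Set.mem_insert_iff, Set.mem_singleton_iff] at ha hb hc
  rcases ha with rfl | rfl | rfl <;> rcases hb with rfl | rfl | rfl <;>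
    rcases hc with rfl | rfl | rfl <;> norm_num at *

lemma add_eq_zero_of_mul_eq_neg_one {a b : ℝ} (ha : a ∈ ({-1, 0, 1} : Set ℝ))
    (hb : b ∈ ({-1, 0, 1} : Set ℝ)) (h : a * b = -1) : a + b = 0 := by
  simp only [Set.mem_insert_iff, Set.mem_singleton_iff] at ha hb
  rcases ha with rfl | rfl | rfl <;> rcases hb with rfl | rfl | rfl <;> norm_num at *

theorem stmt8_general (V : Submodule ℝ (Fin n → ℝ))
    (r : Fin n) (P Q M J : Fin n → ℝ) (hP : IsRPath V r P) (hQ : IsRPath V r Q)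
    (hMJ : MeetJoinDecomp V r P Q M J) (j : Fin n) :
    (M j ≠ 0 → M j = P j ∨ M j = Q j) ∧
      (P j * Q j = -1 → M j = 0 ∧ J j = 0) := by
  obtain ⟨k, p, a, b, hprim, hconf, -, -, rfl, rfl, -⟩ := hMJ
  refine ⟨fun hM => eq_or_eq_of_mul_add_pos (hP.1.2 j) (hQ.1.2 j) ((hprim a).2 j)
    (hconf a j hM), fun hPQ => ?_⟩
  have hsum : (P + Q) j = 0 := add_eq_zero_of_mul_eq_neg_one (hP.1.2 j) (hQ.1.2 j) hPQ
  exact ⟨(hconf a).apply_eq_zero hsum, (hconf b).apply_eq_zero hsum⟩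

theorem stmt8 (V : Submodule ℝ (Fin n → ℝ)) (hV : IsRegularSpace V)
    (r : Fin n) (P Q M J : Fin n → ℝ) (hP : IsRPath V r P) (hQ : IsRPath V r Q)
    (hMJ : MeetJoinDecomp V r P Q M J) (j : Fin n) :
    (M j ≠ 0 → M j = P j ∨ M j = Q j) ∧
      (P j * Q j = -1 → M j = 0 ∧ J j = 0) :=
  stmt8_general V r P Q M J hP hQ hMJ j
end

section
/- Let V ⊆ ℝ^n be a regular space, P, Q ∈ V r-paths with associated paths P∧Q, P∨Q. If (P∧Q)_j · (P∨Q)_j ≠ 0 for some index j, then (P∧Q)_j = (P∨Q)_j = P_j = Q_j. -/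
open Finset

variable {n : ℕ}

/-! The summands of a conformal decomposition never cancel, so at `j` we get
`|P j + Q j| = ∑ i, |p i j| ≥ |M j| + |J j| = 2`. As `|P j|, |Q j| ≤ 1`, this forces
`P j = Q j = ±1`; and `M j`, `J j` are `±1` with the sign of `P j + Q j`, hence equal `P j`. -/

theorem Finset.abs_sum_eq_sum_abs_of_mul_pos {ι : Type*} (t : Finset ι) {x : ι → ℝ} {s : ℝ}
    (hx : ∀ i ∈ t, x i ≠ 0 → 0 < x i * s) : |∑ i ∈ t, x i| = ∑ i ∈ t, |x i| := by
  rcases le_total 0 s with hs | hs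
  · have hx₀ : ∀ i ∈ t, 0 ≤ x i := fun i hi => by
      by_contra! h
      exact (mul_nonpos_of_nonpos_of_nonneg h.le hs).not_gt (hx i hi h.ne)
    rw [abs_sum_of_nonneg hx₀, sum_congr rfl fun i hi => abs_of_nonneg (hx₀ i hi)]
  · have hx₀ : ∀ i ∈ t, 0 ≤ -x i := fun i hi => by
      by_contra! h
      exact (mul_nonpos_of_nonneg_of_nonpos (neg_lt_zero.mp h).le hs).not_gt
        (hx i hi (by linarith))
    rw [← abs_neg, ← sum_neg_distrib, abs_sum_of_nonneg hx₀,
      sum_congr rfl fun i hi => (abs_of_nonneg (hx₀ i hi)).symm,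
      sum_congr rfl fun i _ => abs_neg _]

theorem abs_add_abs_le_abs_of_conformal_sum {ι : Type*} [Fintype ι] {p : ι → Fin n → ℝ}
    {x : Fin n → ℝ} (hconf : ∀ i, Conforms (p i) x) (hsum : ∑ i, p i = x) {a b : ι}
    (hab : a ≠ b) (j : Fin n) : |p a j| + |p b j| ≤ |x j| := by
  classical
  have hx : x j = ∑ i, p i j := by rw [← hsum, Finset.sum_apply]
  rw [hx, Finset.abs_sum_eq_sum_abs_of_mul_pos _ fun i _ hi => hconf i j hi,
    ← Finset.sum_pair (f := fun i => |p i j|) hab]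
  exact Finset.sum_le_sum_of_subset_of_nonneg (Finset.subset_univ _) fun i _ _ => abs_nonneg _

theorem abs_le_one_of_mem_signs {x : ℝ} (hx : x ∈ ({-1, 0, 1} : Set ℝ)) : |x| ≤ 1 := by
  rcases hx with rfl | rfl | rfl <;> norm_num

theorem abs_eq_one_of_mem_signs {x : ℝ} (hx : x ∈ ({-1, 0, 1} : Set ℝ)) (h₀ : x ≠ 0) :
    |x| = 1 := by
  rcases hx with rfl | rfl | rfl <;> simp_all

theorem IsPrimitive.abs_apply_le_one {V : Submodule ℝ (Fin n → ℝ)} {x : Fin n → ℝ}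
    (hx : IsPrimitive V x) (j : Fin n) : |x j| ≤ 1 :=
  abs_le_one_of_mem_signs (hx.2 j)

theorem IsPrimitive.abs_apply_eq_one {V : Submodule ℝ (Fin n → ℝ)} {x : Fin n → ℝ}
    (hx : IsPrimitive V x) {j : Fin n} (h₀ : x j ≠ 0) : |x j| = 1 :=
  abs_eq_one_of_mem_signs (hx.2 j) h₀

theorem eq_and_abs_eq_one_of_two_le_abs_add {x y : ℝ} (hx : |x| ≤ 1) (hy : |y| ≤ 1)
    (h : 2 ≤ |x + y|) : x = y ∧ |x| = 1 := by
  rw [abs_le] at hx hy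
  rcases le_abs'.mp h with h | h
  · exact ⟨by linarith, by rw [abs_of_neg (by linarith)]; linarith⟩
  · exact ⟨by linarith, by rw [abs_of_pos (by linarith)]; linarith⟩

theorem eq_of_abs_eq_one_of_mul_pos {x y : ℝ} (hx : |x| = 1) (hy : |y| = 1) (h : 0 < x * y) :
    x = y := by
  rcases abs_eq (zero_le_one' ℝ) |>.mp hx with rfl | rfl <;>
    rcases abs_eq (zero_le_one' ℝ) |>.mp hy with rfl | rfl <;> linarith

theorem stmt9_general (V : Submodule ℝ (Fin n → ℝ))
    (r : Fin n) (P Q M J : Fin n → ℝ) (hP : IsRPath V r P) (hQ : IsRPath V r Q)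
    (hMJ : MeetJoinDecomp V r P Q M J) (j : Fin n) (hj : M j * J j ≠ 0) :
    M j = J j ∧ J j = P j ∧ P j = Q j := by
  obtain ⟨k, p, a, b, hprim, hconf, hsum, hab, rfl, rfl, -, -, -⟩ := hMJ
  have hM : |p a j| = 1 := (hprim a).abs_apply_eq_one (left_ne_zero_of_mul hj)
  have hJ : |p b j| = 1 := (hprim b).abs_apply_eq_one (right_ne_zero_of_mul hj)
  have htwo : 2 ≤ |P j + Q j| := by
    have hle := abs_add_abs_le_abs_of_conformal_sum hconf hsum hab j
    rw [hM, hJ, Pi.add_apply] at hle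
    linarith
  obtain ⟨hPQ, hP₁⟩ : P j = Q j ∧ |P j| = 1 :=
    eq_and_abs_eq_one_of_two_le_abs_add (hP.1.abs_apply_le_one j) (hQ.1.abs_apply_le_one j) htwo
  have hagree : ∀ i, |p i j| = 1 → p i j = P j := fun i hi => by
    have hpos := hconf i j (abs_pos.mp (hi ▸ one_pos))
    rw [Pi.add_apply, ← hPQ] at hpos
    exact eq_of_abs_eq_one_of_mul_pos hi hP₁ (by linarith)
  exact ⟨(hagree a hM).trans (hagree b hJ).symm, hagree b hJ, hPQ⟩

theorem stmt9 (V : Submodule ℝ (Fin n → ℝ)) (hV : IsRegularSpace V)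
    (r : Fin n) (P Q M J : Fin n → ℝ) (hP : IsRPath V r P) (hQ : IsRPath V r Q)
    (hMJ : MeetJoinDecomp V r P Q M J) (j : Fin n) (hj : M j * J j ≠ 0) :
    M j = J j ∧ J j = P j ∧ P j = Q j :=
  stmt9_general V r P Q M J hP hQ hMJ j hj
end
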